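/- arXiv:2212.05133 — 3 statements merged into one kernel-verified Lean document; each statement's English description precedes it below -/
import Mathlib

section
/- Any subset A of the Hamming cube {0,1}^d whose Hamming diameter is at most 2t+1, where 2t+1 ≤ d-1, has cardinality at most C(d-1,t) + ∑_{i=0}^{t} C(d,i). (Kleitman's theorem, odd diameter case.) -/
/-!
Compressions preserve the size and the diameter of a family of subsets of `range n`:
`UV.compress ∅ {j}` deletes `j`, and `UV.compress {i} {j}` with `i < j` replaces `j` by `i`.
Each nontrivial one decreases `∑ F, ∑ x ∈ F, 2 ^ x`, so we may assume the family is a down-set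
closed under left shifts. For a down-set, diameter `≤ m` says that disjoint members have total
size `≤ m`. Split on the last coordinate `n`: the members avoiding `n` satisfy the same condition
in dimension `n`, and the members containing `n`, with `n` removed, satisfy it with `m - 2`,
because two free coordinates below `n` let us shift `n` to a different one in each of two sets.
The bound obeys the matching Pascal recursion; the base cases are the full cube (`n ≤ m`) and
`n = m + 1`, where no member lies in the family together with its complement.
-/

open Finset

open scoped FinsetFamily symmDiff

lemma card_symmDiff_le_of_card_le_two {α : Type*} [DecidableEq α] {s t : Finset α}
    (ht : #t ≤ 2) (hst : (s ∩ t).Nonempty) : #(s ∆ t) ≤ #s := by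
  rw [symmDiff_def, sup_eq_union, card_union_of_disjoint disjoint_sdiff_sdiff]
  have hs := card_sdiff_add_card_inter s t
  have ht' := card_sdiff_add_card_inter t s
  rw [inter_comm] at ht'
  have := hst.card_pos
  omega

lemma card_le_two_pow_of_forall_subset {α : Type*} {𝒜 : Finset (Finset α)} {S : Finset α}
    (h : ∀ F ∈ 𝒜, F ⊆ S) : #𝒜 ≤ 2 ^ #S :=
  (card_le_card fun F hF => mem_powerset.2 (h F hF)).trans_eq (card_powerset S)

lemma two_mul_card_le_of_sdiff_notMem {α : Type*} [DecidableEq α] {𝒜 : Finset (Finset α)}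
    {S : Finset α} (hS : ∀ F ∈ 𝒜, F ⊆ S) (h : ∀ F ∈ 𝒜, S \ F ∉ 𝒜) : 2 * #𝒜 ≤ 2 ^ #S := by
  have hinj : Set.InjOn (S \ ·) 𝒜 := fun F hF G hG hFG => by
    rw [← Finset.sdiff_sdiff_eq_self (hS F hF), ← Finset.sdiff_sdiff_eq_self (hS G hG)]
    exact congrArg (S \ ·) hFG
  have hdisj : Disjoint 𝒜 (𝒜.image (S \ ·)) := by
    refine disjoint_right.2 fun P hP => ?_
    obtain ⟨F, hF, rfl⟩ := mem_image.1 hP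
    exact h F hF
  calc 2 * #𝒜 = #(𝒜 ∪ 𝒜.image (S \ ·)) := by
        rw [card_union_of_disjoint hdisj, card_image_of_injOn hinj, two_mul]
    _ ≤ 2 ^ #S := card_le_two_pow_of_forall_subset fun P hP => ?_
  rcases mem_union.1 hP with hP | hP
  · exact hS P hP
  · obtain ⟨F, -, rfl⟩ := mem_image.1 hP
    exact sdiff_subset

lemma isLowerSet_of_erase_mem {α : Type*} [DecidableEq α] {𝒜 : Finset (Finset α)}
    (h : ∀ F ∈ 𝒜, ∀ j, F.erase j ∈ 𝒜) : IsLowerSet (𝒜 : Set (Finset α)) := by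
  intro F G hGF hF
  have hsdiff : ∀ C : Finset α, F \ C ∈ 𝒜 := by
    intro C
    induction C using Finset.induction_on with
    | empty => simpa using hF
    | insert x C _ ih => rw [sdiff_insert]; exact h _ ih x
  rw [mem_coe, ← Finset.sdiff_sdiff_eq_self hGF]
  exact hsdiff (F \ G)

namespace UV

section GeneralizedBooleanAlgebra

variable {α : Type*} [GeneralizedBooleanAlgebra α] [DecidableRel (@Disjoint α _ _)]
  [DecidableLE α] {u v a : α}

lemma disjoint_and_le_of_compress_ne (h : compress u v a ≠ a) : Disjoint u a ∧ v ≤ a := by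
  unfold compress at h
  split_ifs at h with huva
  exacts [huva, absurd rfl h]

variable [DecidableEq α] {s : Finset α}

lemma forall_mem_compression {p : α → Prop} (hs : ∀ a ∈ s, p a)
    (hc : ∀ a ∈ s, p (compress u v a)) : ∀ a ∈ 𝓒 u v s, p a := by
  intro a ha
  rcases mem_compression.1 ha with ⟨ha, -⟩ | ⟨-, b, hb, rfl⟩
  exacts [hs a ha, hc b hb]

lemma sum_compression_lt {w : α → ℕ}
    (hw : ∀ a, compress u v a ≠ a → w (compress u v a) < w a)
    (h : ∃ a ∈ s, compress u v a ∉ s) : ∑ a ∈ 𝓒 u v s, w a < ∑ a ∈ s, w a := by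
  rw [compression, sum_union compress_disjoint, filter_image, sum_image compress_injOn,
    ← sum_filter_add_sum_filter_not s (fun a => compress u v a ∈ s)]
  refine add_lt_add_right (sum_lt_sum_of_nonempty ?_ fun a ha => hw a ?_) _
  · obtain ⟨a, ha, hca⟩ := h
    exact ⟨a, mem_filter.2 ⟨ha, hca⟩⟩
  · rw [mem_filter] at ha
    exact fun hfix => ha.2 (by rw [hfix]; exact ha.1)

end GeneralizedBooleanAlgebra

variable {α : Type*} [DecidableEq α] {u v a b : Finset α}

lemma compress_eq_symmDiff (hua : Disjoint u a) (hva : v ⊆ a) :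
    compress u v a = a ∆ (u ∪ v) := by
  rw [compress_of_disjoint_of_le hua hva]
  ext x
  simp only [sup_eq_union, mem_sdiff, mem_union, mem_symmDiff]
  have hxu : x ∈ u → x ∉ a := fun hx => disjoint_left.1 hua hx
  have hxv : x ∈ v → x ∈ a := fun hx => hva hx
  tauto

lemma compress_symmDiff_compress (ha : Disjoint u a ∧ v ⊆ a) (hb : Disjoint u b ∧ v ⊆ b) :
    compress u v a ∆ compress u v b = a ∆ b := by
  rw [compress_eq_symmDiff ha.1 ha.2, compress_eq_symmDiff hb.1 hb.2,
    symmDiff_symmDiff_symmDiff_comm, symmDiff_self, symmDiff_bot]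

lemma compress_symmDiff (ha : Disjoint u a ∧ v ⊆ a) (hb : Disjoint u b ∧ v ⊆ b) :
    compress u v a ∆ b = a ∆ compress u v b := by
  rw [compress_eq_symmDiff ha.1 ha.2, compress_eq_symmDiff hb.1 hb.2, symmDiff_right_comm,
    symmDiff_assoc]

lemma card_compress_symmDiff_le (huv : #u + #v ≤ 2) (ha : Disjoint u a ∧ v ⊆ a)
    (hb : ¬(Disjoint u b ∧ v ⊆ b)) : #(compress u v a ∆ b) ≤ #(a ∆ b) := by
  rw [compress_eq_symmDiff ha.1 ha.2, symmDiff_right_comm]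
  refine card_symmDiff_le_of_card_le_two (card_union_le _ _ |>.trans huv) ?_
  by_cases hub : Disjoint u b
  · obtain ⟨x, hxv, hxb⟩ := not_subset.1 fun hvb => hb ⟨hub, hvb⟩
    exact ⟨x, mem_inter.2 ⟨mem_symmDiff.2 (Or.inl ⟨ha.2 hxv, hxb⟩), mem_union_right _ hxv⟩⟩
  · obtain ⟨x, hxu, hxb⟩ := not_disjoint_iff.1 hub
    exact ⟨x, mem_inter.2 ⟨mem_symmDiff.2 (Or.inr ⟨hxb, disjoint_left.1 ha.1 hxu⟩),
      mem_union_left _ hxu⟩⟩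

lemma compress_empty_singleton (j : α) (F : Finset α) : compress ∅ {j} F = F.erase j := by
  unfold compress
  split_ifs with h
  · simp [sdiff_singleton_eq_erase]
  · simp only [disjoint_empty_left, true_and, singleton_subset_iff] at h
    exact (erase_eq_of_notMem h).symm

lemma compress_singleton_singleton {i j : α} {F : Finset α} (hi : i ∉ F) (hj : j ∈ F) :
    compress {i} {j} F = (insert i F).erase j := by
  rw [compress_of_disjoint_of_le (disjoint_singleton_left.2 hi) (singleton_subset_iff.2 hj)]
  rw [sdiff_singleton_eq_erase, sup_eq_union, union_comm, ← insert_eq]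

lemma sum_two_pow_compress_lt {u F : Finset ℕ} {j : ℕ} (hF : compress u {j} F ≠ F)
    (hu : ∀ i ∈ u, i < j) : ∑ x ∈ compress u {j} F, 2 ^ x < ∑ x ∈ F, 2 ^ x := by
  obtain ⟨huF, hjF⟩ := disjoint_and_le_of_compress_ne hF
  rw [compress_of_disjoint_of_le huF hjF]
  have hsplit := sum_sdiff (f := fun x => 2 ^ x)
    (singleton_subset_iff.2 (mem_union_left u (hjF (mem_singleton_self j))))
  rw [sum_union huF.symm, sum_singleton] at hsplit
  have := Nat.geomSum_lt le_rfl hu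
  simp only [sup_eq_union]
  omega

lemma compress_subset_range {u F : Finset ℕ} {j n : ℕ} (hu : ∀ i ∈ u, i < j)
    (hF : F ⊆ range n) : compress u {j} F ⊆ range n := by
  by_cases hfix : compress u {j} F = F
  · rwa [hfix]
  obtain ⟨huF, hjF⟩ := disjoint_and_le_of_compress_ne hfix
  have hj : j < n := mem_range.1 (hF (hjF (mem_singleton_self j)))
  rw [compress_of_disjoint_of_le huF hjF]
  intro x hx
  simp only [sup_eq_union, mem_sdiff, mem_union] at hx
  rcases hx.1 with hx | hx
  · exact hF hx
  · exact mem_range.2 ((hu x hx).trans hj)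

end UV

open UV

section Diameter

variable {α : Type*} [DecidableEq α]

def DiamLE (𝒜 : Finset (Finset α)) (s : ℕ) : Prop := ∀ F ∈ 𝒜, ∀ G ∈ 𝒜, #(F ∆ G) ≤ s

variable {𝒜 : Finset (Finset α)} {s : ℕ}

lemma DiamLE.card_add_card_le (h : DiamLE 𝒜 s) {F G : Finset α} (hF : F ∈ 𝒜) (hG : G ∈ 𝒜)
    (hFG : Disjoint F G) : #F + #G ≤ s := by
  simpa [hFG.symmDiff_eq_sup, card_union_of_disjoint hFG] using h F hF G hG

theorem DiamLE.uvCompression (h : DiamLE 𝒜 s) {u v : Finset α} (huv : #u + #v ≤ 2) :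
    DiamLE (𝓒 u v 𝒜) s := by
  have compressible {F} (hF : F ∈ 𝒜) (hcF : compress u v F ∉ 𝒜) : Disjoint u F ∧ v ⊆ F :=
    disjoint_and_le_of_compress_ne fun hfix => hcF (by rw [hfix]; exact hF)
  have moved : ∀ F ∈ 𝒜, compress u v F ∉ 𝒜 → ∀ Q ∈ 𝓒 u v 𝒜, #(compress u v F ∆ Q) ≤ s := by
    intro F hF hcF Q hQ
    rcases mem_compression.1 hQ with ⟨hQ, hcQ⟩ | ⟨hQ, G, hG, rfl⟩
    · by_cases hQc : Disjoint u Q ∧ v ⊆ Q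
      · rw [compress_symmDiff (compressible hF hcF) hQc]
        exact h F hF _ hcQ
      · exact (card_compress_symmDiff_le huv (compressible hF hcF) hQc).trans (h F hF Q hQ)
    · rw [compress_symmDiff_compress (compressible hF hcF) (compressible hG hQ)]
      exact h F hF G hG
  intro P hP Q hQ
  rcases mem_compression.1 hP with ⟨hP', -⟩ | ⟨hP', F, hF, rfl⟩
  · rcases mem_compression.1 hQ with ⟨hQ', -⟩ | ⟨hQ', G, hG, rfl⟩
    · exact h P hP' Q hQ'
    · rw [symmDiff_comm]
      exact moved G hG hQ' P hP
  · exact moved F hF hP' Q hQ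

end Diameter

def IsLeftShifted (𝒜 : Finset (Finset ℕ)) : Prop :=
  ∀ F ∈ 𝒜, ∀ i j, i < j → j ∈ F → i ∉ F → (insert i F).erase j ∈ 𝒜

theorem exists_isLowerSet_isLeftShifted {n s : ℕ} (𝒜 : Finset (Finset ℕ))
    (hr : ∀ F ∈ 𝒜, F ⊆ range n) (hd : DiamLE 𝒜 s) :
    ∃ ℬ : Finset (Finset ℕ), #ℬ = #𝒜 ∧ (∀ F ∈ ℬ, F ⊆ range n) ∧ DiamLE ℬ s ∧
      IsLowerSet (ℬ : Set (Finset ℕ)) ∧ IsLeftShifted ℬ := by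
  induction hp : ∑ F ∈ 𝒜, ∑ x ∈ F, 2 ^ x using Nat.strong_induction_on generalizing 𝒜 with
  | _ p ih =>
  by_cases hmove : ∃ u j, (∀ i ∈ u, i < j) ∧ #u ≤ 1 ∧ ∃ F ∈ 𝒜, compress u {j} F ∉ 𝒜
  · obtain ⟨u, j, hu, hu1, hF⟩ := hmove
    have hlt := hp ▸ sum_compression_lt (fun F hF => sum_two_pow_compress_lt hF hu) hF
    obtain ⟨ℬ, hcard, hℬ⟩ := ih _ hlt (𝓒 u {j} 𝒜)
      (forall_mem_compression hr fun F hF => compress_subset_range hu (hr F hF))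
      (hd.uvCompression (by rw [card_singleton]; omega)) rfl
    exact ⟨ℬ, hcard.trans (card_compression _ _ _), hℬ⟩
  · push Not at hmove
    refine ⟨𝒜, rfl, hr, hd, isLowerSet_of_erase_mem fun F hF j => ?_,
      fun F hF i j hij hj hi => ?_⟩
    · simpa [compress_empty_singleton] using hmove ∅ j (by simp) (by simp) F hF
    · rw [← compress_singleton_singleton hi hj]
      exact hmove {i} j (by simpa) (by simp) F hF

lemma sum_range_choose_succ (n r : ℕ) :
    ∑ i ∈ range (r + 1), (n + 1).choose i =
      ∑ i ∈ range (r + 1), n.choose i + ∑ i ∈ range r, n.choose i := by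
  induction r with
  | zero => simp
  | succ r ih =>
    rw [sum_range_succ, ih, sum_range_succ _ (r + 1), sum_range_succ _ r, Nat.choose_succ_succ']
    ring

/-- Attained by the Hamming ball of radius `m / 2` when `m` is even, and by
`{F | #(F.erase (n - 1)) ≤ m / 2}` when `m` is odd. -/
def kleitmanBound (n m : ℕ) : ℕ :=
  if n ≤ m then 2 ^ n
  else if Even m then ∑ i ∈ range (m / 2 + 1), n.choose i
  else 2 * ∑ i ∈ range (m / 2 + 1), (n - 1).choose i

lemma kleitmanBound_of_le {n m : ℕ} (h : n ≤ m) : kleitmanBound n m = 2 ^ n := if_pos h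

lemma kleitmanBound_even {n r : ℕ} (h : 2 * r < n) :
    kleitmanBound n (2 * r) = ∑ i ∈ range (r + 1), n.choose i := by
  rw [kleitmanBound, if_neg h.not_ge, if_pos (even_two_mul r), Nat.mul_div_cancel_left r two_pos]

lemma kleitmanBound_odd {n r : ℕ} (h : 2 * r + 1 < n) :
    kleitmanBound n (2 * r + 1) = 2 * ∑ i ∈ range (r + 1), (n - 1).choose i := by
  rw [kleitmanBound, if_neg h.not_ge, if_neg (Nat.not_even_two_mul_add_one r)]
  congr 3
  omega

lemma kleitmanBound_succ_self (m : ℕ) : kleitmanBound (m + 1) m = 2 ^ m := by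
  obtain ⟨r, rfl | rfl⟩ := Nat.even_or_odd' m
  · rw [kleitmanBound_even (by omega), Nat.sum_range_choose_halfway, pow_mul]
    norm_num
  · rw [kleitmanBound_odd (by omega), Nat.add_sub_cancel, Nat.sum_range_choose_halfway, pow_succ,
      pow_mul]
    norm_num [mul_comm]

lemma kleitmanBound_succ_add_two {n m : ℕ} (h : m + 3 ≤ n) :
    kleitmanBound (n + 1) (m + 2) = kleitmanBound n (m + 2) + kleitmanBound n m := by
  obtain ⟨r, rfl | rfl⟩ := Nat.even_or_odd' m
  · rw [show 2 * r + 2 = 2 * (r + 1) by ring, kleitmanBound_even (by omega),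
      kleitmanBound_even (by omega), kleitmanBound_even (by omega), sum_range_choose_succ]
  · obtain ⟨n, rfl⟩ := Nat.exists_eq_add_of_le' (show 1 ≤ n by omega)
    rw [show 2 * r + 1 + 2 = 2 * (r + 1) + 1 by ring, kleitmanBound_odd (by omega),
      kleitmanBound_odd (by omega), kleitmanBound_odd (by omega), Nat.add_sub_cancel,
      Nat.add_sub_cancel, sum_range_choose_succ, mul_add]

lemma kleitmanBound_succ_of_lt_two {n m : ℕ} (hm : m < 2) (h : m + 1 ≤ n) :
    kleitmanBound (n + 1) m = kleitmanBound n m := by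
  interval_cases m
  · simp [kleitmanBound, show n ≠ 0 by omega]
  · simp [kleitmanBound, show n ≠ 0 by omega, show ¬n ≤ 1 by omega]

lemma kleitmanBound_two_mul_add_one {d t : ℕ} (h : 2 * t + 2 ≤ d) :
    kleitmanBound d (2 * t + 1) = (d - 1).choose t + ∑ i ∈ range (t + 1), d.choose i := by
  obtain ⟨d, rfl⟩ := Nat.exists_eq_add_of_le' (show 1 ≤ d by omega)
  rw [kleitmanBound_odd (by omega), Nat.add_sub_cancel, sum_range_choose_succ, sum_range_succ]
  ring

section LeftShifted

variable {𝒜 : Finset (Finset ℕ)} {n : ℕ}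

lemma subset_range_of_mem_nonMemberSubfamily (hr : ∀ F ∈ 𝒜, F ⊆ range (n + 1))
    {F : Finset ℕ} (hF : F ∈ 𝒜.nonMemberSubfamily n) : F ⊆ range n := by
  rw [mem_nonMemberSubfamily] at hF
  exact (subset_insert_iff_of_notMem hF.2).1 (range_add_one ▸ hr F hF.1)

lemma subset_range_of_mem_memberSubfamily (hr : ∀ F ∈ 𝒜, F ⊆ range (n + 1))
    {F : Finset ℕ} (hF : F ∈ 𝒜.memberSubfamily n) : F ⊆ range n := by
  rw [mem_memberSubfamily] at hF
  exact (subset_insert_iff_of_notMem hF.2).1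
    (range_add_one ▸ (subset_insert n F).trans (hr _ hF.1))

lemma IsLeftShifted.insert_mem (hs : IsLeftShifted 𝒜) {F : Finset ℕ} (hF : insert n F ∈ 𝒜)
    (hnF : n ∉ F) {j : ℕ} (hj : j < n) (hjF : j ∉ F) : insert j F ∈ 𝒜 := by
  have := hs _ hF j n hj (mem_insert_self n F) (by simp [hjF, hj.ne])
  rwa [erase_insert_of_ne hj.ne, erase_insert hnF] at this

lemma IsLeftShifted.nonMemberSubfamily (hr : ∀ F ∈ 𝒜, F ⊆ range (n + 1))
    (hs : IsLeftShifted 𝒜) : IsLeftShifted (𝒜.nonMemberSubfamily n) := by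
  intro F hF i j hij hj hi
  have hin : i ≠ n := by have := mem_range.1 (hr F (mem_nonMemberSubfamily.1 hF).1 hj); omega
  rw [mem_nonMemberSubfamily] at hF ⊢
  exact ⟨hs F hF.1 i j hij hj hi,
    fun h => hF.2 (mem_of_mem_insert_of_ne (mem_of_mem_erase h) hin.symm)⟩

lemma IsLeftShifted.memberSubfamily (hr : ∀ F ∈ 𝒜, F ⊆ range (n + 1))
    (hs : IsLeftShifted 𝒜) : IsLeftShifted (𝒜.memberSubfamily n) := by
  intro F hF i j hij hj hi
  have hin : i ≠ n := by
    have := mem_range.1 (subset_range_of_mem_memberSubfamily hr hF hj); omega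
  rw [mem_memberSubfamily] at hF ⊢
  have hjn : j ≠ n := ne_of_mem_of_not_mem hj hF.2
  refine ⟨?_, fun h => hF.2 (mem_of_mem_insert_of_ne (mem_of_mem_erase h) hin.symm)⟩
  rw [← erase_insert_of_ne hjn.symm, insert_comm]
  exact hs _ hF.1 i j hij (mem_insert_of_mem hj) (by simp [hi, hin])

lemma card_add_card_add_two_le_of_mem_memberSubfamily {m : ℕ}
    (hr : ∀ F ∈ 𝒜, F ⊆ range (n + 1)) (hl : IsLowerSet (𝒜 : Set (Finset ℕ)))
    (hs : IsLeftShifted 𝒜) (hm : ∀ F ∈ 𝒜, ∀ G ∈ 𝒜, Disjoint F G → #F + #G ≤ m)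
    (hmn : m + 1 ≤ n) :
    ∀ F ∈ 𝒜.memberSubfamily n, ∀ G ∈ 𝒜.memberSubfamily n, Disjoint F G → #F + #G + 2 ≤ m := by
  intro F hF G hG hFG
  have hFr := subset_range_of_mem_memberSubfamily hr hF
  have hGr := subset_range_of_mem_memberSubfamily hr hG
  rw [mem_memberSubfamily] at hF hG
  by_cases hfree : 1 < #(range n \ (F ∪ G))
  · -- shift `n` to two distinct free coordinates, one in each set
    obtain ⟨j₁, hj₁, j₂, hj₂, hne⟩ := one_lt_card.1 hfree
    simp only [mem_sdiff, mem_union, mem_range, not_or] at hj₁ hj₂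
    have hdisj : Disjoint (insert j₁ F) (insert j₂ G) := by
      simp [hne.symm, hj₁.2.2, hj₂.2.1, hFG]
    have := hm _ (hs.insert_mem hF.1 hF.2 hj₁.1 hj₁.2.1) _
      (hs.insert_mem hG.1 hG.2 hj₂.1 hj₂.2.2) hdisj
    rw [card_insert_of_notMem hj₁.2.1, card_insert_of_notMem hj₂.2.2] at this
    omega
  · -- `F ∪ G` misses at most one point of `range n`, so `F` and `insert n G` are too large
    have hcover := card_sdiff_add_card_eq_card (union_subset hFr hGr)
    rw [card_range, card_union_of_disjoint hFG] at hcover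
    have := hm F (hl (subset_insert n F) hF.1) _ hG.1 (disjoint_insert_right.2 ⟨hF.2, hFG⟩)
    rw [card_insert_of_notMem hG.2] at this
    omega

end LeftShifted

theorem card_le_kleitmanBound {n m : ℕ} {𝒜 : Finset (Finset ℕ)}
    (hr : ∀ F ∈ 𝒜, F ⊆ range n) (hl : IsLowerSet (𝒜 : Set (Finset ℕ))) (hs : IsLeftShifted 𝒜)
    (hm : ∀ F ∈ 𝒜, ∀ G ∈ 𝒜, Disjoint F G → #F + #G ≤ m) : #𝒜 ≤ kleitmanBound n m := by
  induction n generalizing m 𝒜 with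
  | zero => simpa [kleitmanBound_of_le] using card_le_two_pow_of_forall_subset hr
  | succ n ih =>
  obtain h | rfl | h : n + 1 ≤ m ∨ n = m ∨ m + 1 ≤ n := by omega
  · simpa [kleitmanBound_of_le h] using card_le_two_pow_of_forall_subset hr
  · -- no set is in `𝒜` together with its complement in `range (n + 1)`
    have := two_mul_card_le_of_sdiff_notMem hr fun F hF hcF => by
      have := hm F hF _ hcF disjoint_sdiff
      rw [← card_union_of_disjoint disjoint_sdiff, union_sdiff_of_subset (hr F hF),
        card_range] at this
      omega
    rw [kleitmanBound_succ_self]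
    rw [card_range, pow_succ] at this
    omega
  have hX : #(𝒜.nonMemberSubfamily n) ≤ kleitmanBound n m :=
    ih (fun F hF => subset_range_of_mem_nonMemberSubfamily hr hF) hl.nonMemberSubfamily
      (hs.nonMemberSubfamily hr) fun F hF G hG =>
        hm F (mem_nonMemberSubfamily.1 hF).1 G (mem_nonMemberSubfamily.1 hG).1
  have hY := card_add_card_add_two_le_of_mem_memberSubfamily hr hl hs hm h
  rw [← card_memberSubfamily_add_card_nonMemberSubfamily n 𝒜]
  rcases lt_or_ge m 2 with hm2 | hm2
  · have hempty : 𝒜.memberSubfamily n = ∅ := eq_empty_of_forall_notMem fun F hF => by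
      have h0 : ∅ ∈ 𝒜.memberSubfamily n := hl.memberSubfamily (empty_subset F) hF
      have := hY ∅ h0 ∅ h0 (disjoint_empty_left _)
      omega
    rw [hempty, card_empty, zero_add, kleitmanBound_succ_of_lt_two hm2 h]
    exact hX
  · obtain ⟨m, rfl⟩ := Nat.exists_eq_add_of_le' hm2
    rw [kleitmanBound_succ_add_two (by omega), add_comm]
    refine add_le_add hX (ih (fun F hF => subset_range_of_mem_memberSubfamily hr hF)
      hl.memberSubfamily (hs.memberSubfamily hr) fun F hF G hG hFG => ?_)
    have := hY F hF G hG hFG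
    omega

def trueIndices {d : ℕ} (x : Fin d → Bool) : Finset ℕ :=
  (univ.filter fun i => x i = true).image Fin.val

lemma trueIndices_subset_range {d : ℕ} (x : Fin d → Bool) : trueIndices x ⊆ range d := by
  intro k hk
  obtain ⟨i, -, rfl⟩ := mem_image.1 hk
  exact mem_range.2 i.isLt

lemma val_mem_trueIndices {d : ℕ} {x : Fin d → Bool} {i : Fin d} :
    i.val ∈ trueIndices x ↔ x i = true := by
  simp [trueIndices, Fin.val_inj]

lemma trueIndices_injective {d : ℕ} : Function.Injective (trueIndices (d := d)) := by
  intro x y h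
  funext i
  rw [Bool.eq_iff_iff, ← val_mem_trueIndices, ← val_mem_trueIndices, h]

lemma card_symmDiff_trueIndices {d : ℕ} (x y : Fin d → Bool) :
    #(trueIndices x ∆ trueIndices y) = hammingDist x y := by
  rw [trueIndices, trueIndices, ← image_symmDiff _ _ Fin.val_injective,
    card_image_of_injective _ Fin.val_injective, hammingDist]
  congr 1
  ext i
  simp only [mem_symmDiff, mem_filter, mem_univ, true_and]
  cases x i <;> cases y i <;> simp

theorem stmt_4_general {d t : ℕ} (A : Finset (Fin d → Bool))
    (hdiam : ∀ x ∈ A, ∀ y ∈ A, hammingDist x y ≤ 2 * t + 1)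
    (ht : 2 * t + 1 ≤ d - 1) :
    A.card ≤ (d - 1).choose t + ∑ i ∈ Finset.range (t + 1), d.choose i := by
  have hA : DiamLE (A.image trueIndices) (2 * t + 1) := by
    simpa only [DiamLE, forall_mem_image, card_symmDiff_trueIndices] using hdiam
  obtain ⟨ℬ, hcard, hr, hdℬ, hl, hs⟩ := exists_isLowerSet_isLeftShifted (A.image trueIndices)
    (by simpa using fun x _ => trueIndices_subset_range x) hA
  rw [← card_image_of_injective A trueIndices_injective, ← hcard,
    ← kleitmanBound_two_mul_add_one (by omega)]
  exact card_le_kleitmanBound hr hl hs fun F hF G hG => hdℬ.card_add_card_le hF hG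

theorem stmt_4 {d t : ℕ} (A : Finset (Fin d → Bool))
    (hdiam : ∀ x ∈ A, ∀ y ∈ A, hammingDist x y ≤ 2 * t + 1)
    (ht : 2 * t + 1 ≤ d - 1) (hd : 1 ≤ d) :
    A.card ≤ (d - 1).choose t + ∑ i ∈ Finset.range (t + 1), d.choose i :=
  stmt_4_general A hdiam ht
end

section
/- Superadditivity: if 1 ≤ k_i ≤ d_i for i = 1,2, then n(k_1,d_1)·n(k_2,d_2) ≤ n(k_1+k_2, d_1+d_2). More precisely, if F ⊆ {0,1,*}^{d_1} is k_1-neighborly and G ⊆ {0,1,*}^{d_2} is k_2-neighborly, then the family of concatenations FG = {uv : u ∈ F, v ∈ G} ⊆ {0,1,*}^{d_1+d_2} is (k_1+k_2)-neighborly and has size |F|·|G|. -/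
open Finset

/-- Number of coordinates where one string has 0 and the other 1. -/
def Dd {d : ℕ} (x y : Fin d → Option Bool) : ℕ :=
  (univ.filter fun i => ∃ b : Bool, x i = some b ∧ y i = some !b).card

/-- The subcube of binary strings agreeing with `x` on all non-joker coordinates. -/
def Hcube {d : ℕ} (x : Fin d → Option Bool) : Finset (Fin d → Bool) :=
  univ.filter fun u => ∀ i : Fin d, ∀ b : Bool, x i = some b → u i = b

/-- Number of joker (`*`) coordinates of `x`. -/
def jok {d : ℕ} (x : Fin d → Option Bool) : ℕ :=
  (univ.filter fun i => x i = none).card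

/-- `k`-neighborly family of strings in `{0,1,*}^d`. -/
def Nbly {d : ℕ} (k : ℕ) (F : Finset (Fin d → Option Bool)) : Prop :=
  ∀ x ∈ F, ∀ y ∈ F, x ≠ y → 1 ≤ Dd x y ∧ Dd x y ≤ k

/-- `n(k,d)`: maximum size of a `k`-neighborly family in `{0,1,*}^d`. -/
noncomputable def nbox (k d : ℕ) : ℕ :=
  sSup {n | ∃ F : Finset (Fin d → Option Bool), Nbly k F ∧ F.card = n}

lemma Dd_self {d : ℕ} (x : Fin d → Option Bool) : Dd x x = 0 := by
  unfold Dd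
  rw [Finset.card_eq_zero, Finset.filter_eq_empty_iff]
  rintro i - ⟨b, h1, h2⟩
  rw [h1] at h2
  simp at h2

lemma Dd_append {d₁ d₂ : ℕ} (u u' : Fin d₁ → Option Bool) (v v' : Fin d₂ → Option Bool) :
    Dd (Fin.append u v) (Fin.append u' v') = Dd u u' + Dd v v' := by
  classical
  unfold Dd
  rw [Finset.card_filter, Finset.card_filter, Finset.card_filter, Fin.sum_univ_add]
  congr 1
  · exact Finset.sum_congr rfl fun i _ => by simp [Fin.append_left]
  · exact Finset.sum_congr rfl fun i _ => by simp [Fin.append_right]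

lemma append_inj {d₁ d₂ : ℕ} {u u' : Fin d₁ → Option Bool} {v v' : Fin d₂ → Option Bool}
    (h : Fin.append u v = Fin.append u' v') : u = u' ∧ v = v' := by
  constructor
  · funext i
    have := congrFun h (Fin.castAdd d₂ i)
    simpa [Fin.append_left] using this
  · funext i
    have := congrFun h (Fin.natAdd d₁ i)
    simpa [Fin.append_right] using this

lemma Nbly_prod {k₁ k₂ d₁ d₂ : ℕ}
    (F : Finset (Fin d₁ → Option Bool)) (G : Finset (Fin d₂ → Option Bool))
    (hF : Nbly k₁ F) (hG : Nbly k₂ G) :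
    Nbly (k₁ + k₂) ((F ×ˢ G).image fun p => Fin.append p.1 p.2) := by
  rintro x hx y hy hxy
  simp only [Finset.mem_image, Finset.mem_product, Prod.exists] at hx hy
  obtain ⟨u, v, ⟨hu, hv⟩, rfl⟩ := hx
  obtain ⟨u', v', ⟨hu', hv'⟩, rfl⟩ := hy
  rw [Dd_append]
  have hne : u ≠ u' ∨ v ≠ v' := by
    by_contra h
    push_neg at h
    exact hxy (by rw [h.1, h.2])
  have h1 : Dd u u' ≤ k₁ := by
    by_cases h : u = u'
    · subst h; rw [Dd_self]; omega
    · exact (hF u hu u' hu' h).2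
  have h2 : Dd v v' ≤ k₂ := by
    by_cases h : v = v'
    · subst h; rw [Dd_self]; omega
    · exact (hG v hv v' hv' h).2
  constructor
  · rcases hne with h | h
    · have := (hF u hu u' hu' h).1; omega
    · have := (hG v hv v' hv' h).1; omega
  · omega

lemma card_prod {d₁ d₂ : ℕ}
    (F : Finset (Fin d₁ → Option Bool)) (G : Finset (Fin d₂ → Option Bool)) :
    ((F ×ˢ G).image fun p => Fin.append p.1 p.2).card = F.card * G.card := by
  rw [Finset.card_image_of_injOn, Finset.card_product]
  rintro ⟨u, v⟩ _ ⟨u', v'⟩ _ h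
  obtain ⟨h1, h2⟩ := append_inj h
  exact Prod.ext h1 h2

lemma nbox_mem (k d : ℕ) :
    ∃ F : Finset (Fin d → Option Bool), Nbly k F ∧ F.card = nbox k d := by
  have hne : ({n | ∃ F : Finset (Fin d → Option Bool), Nbly k F ∧ F.card = n}).Nonempty :=
    ⟨0, ∅, fun x hx => absurd hx (by simp), by simp⟩
  have hbdd : BddAbove {n | ∃ F : Finset (Fin d → Option Bool), Nbly k F ∧ F.card = n} := by
    refine ⟨Fintype.card (Fin d → Option Bool), ?_⟩
    rintro n ⟨F, -, rfl⟩
    exact Finset.card_le_univ F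
  have := Nat.sSup_mem hne hbdd
  exact this

theorem stmt_10 {k₁ k₂ d₁ d₂ : ℕ} (hk₁ : 1 ≤ k₁) (hd₁ : k₁ ≤ d₁)
    (hk₂ : 1 ≤ k₂) (hd₂ : k₂ ≤ d₂)
    (F : Finset (Fin d₁ → Option Bool)) (G : Finset (Fin d₂ → Option Bool))
    (hF : Nbly k₁ F) (hG : Nbly k₂ G) :
    Nbly (k₁ + k₂) ((F ×ˢ G).image fun p => Fin.append p.1 p.2) ∧
      ((F ×ˢ G).image fun p => Fin.append p.1 p.2).card = F.card * G.card ∧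
      nbox k₁ d₁ * nbox k₂ d₂ ≤ nbox (k₁ + k₂) (d₁ + d₂) := by
  refine ⟨Nbly_prod F G hF hG, card_prod F G, ?_⟩
  obtain ⟨F₁, hF₁, hcF⟩ := nbox_mem k₁ d₁
  obtain ⟨G₁, hG₁, hcG⟩ := nbox_mem k₂ d₂
  have hbdd : BddAbove {n | ∃ F : Finset (Fin (d₁ + d₂) → Option Bool),
      Nbly (k₁ + k₂) F ∧ F.card = n} := by
    refine ⟨Fintype.card (Fin (d₁ + d₂) → Option Bool), ?_⟩
    rintro n ⟨H, -, rfl⟩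
    exact Finset.card_le_univ H
  calc nbox k₁ d₁ * nbox k₂ d₂ = ((F₁ ×ˢ G₁).image fun p => Fin.append p.1 p.2).card := by
        rw [card_prod, hcF, hcG]
    _ ≤ nbox (k₁ + k₂) (d₁ + d₂) :=
        le_csSup hbdd ⟨_, Nbly_prod F₁ G₁ hF₁ hG₁, rfl⟩
end

section
/- If F ⊆ {0,1,*}^d is a k-neighborly family of maximum size (with k ≤ d), then every string in F has at most d - k joker (*) symbols. -/
open Finset

open Function

/-!
Replacing a string `x` of a `k`-neighborly family by the two strings obtained from `x` by setting
a joker coordinate to `0` and to `1` keeps the family `k`-neighborly as long as `x` has more than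
`d - k` jokers: the two new strings are at distance `1` from each other, and their distance to any
other member `y` is at least `D(x, y) ≥ 1` and at most `D(x, y) + 1 ≤ (d - jok x) + 1 ≤ k`.
The new family is one larger, so a family of maximum size has no such string.
-/

section Distance

variable {d : ℕ}

lemma Dd_comm (x y : Fin d → Option Bool) : Dd x y = Dd y x := by
  unfold Dd
  congr 1
  ext i
  simp only [mem_filter, mem_univ, true_and]
  constructor <;> rintro ⟨b, hx, hy⟩ <;> exact ⟨!b, hy, by simpa using hx⟩

lemma Dd_le_sub_jok (x y : Fin d → Option Bool) : Dd x y ≤ d - jok x := by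
  have hDd : Dd x y ≤ #{i | x i ≠ none} :=
    card_le_card fun i hi => by
      obtain ⟨b, hb, -⟩ := (mem_filter.mp hi).2
      simp [hb]
  have hsplit : jok x + #{i | x i ≠ none} = d := by
    rw [jok, card_filter_add_card_filter_not, card_univ, Fintype.card_fin]
  omega

lemma jok_le (x : Fin d → Option Bool) : jok x ≤ d :=
  (card_filter_le _ _).trans_eq (by simp)

variable {x : Fin d → Option Bool} {i : Fin d}

lemma Dd_le_Dd_update (hi : x i = none) (b : Bool) (y : Fin d → Option Bool) :
    Dd x y ≤ Dd (update x i (some b)) y :=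
  card_le_card fun j hj => by
    obtain ⟨c, hxj, hyj⟩ := (mem_filter.mp hj).2
    have hji : j ≠ i := by rintro rfl; simp [hi] at hxj
    exact mem_filter.mpr ⟨mem_univ j, c, by rwa [update_of_ne hji], hyj⟩

lemma Dd_update_le_succ (x : Fin d → Option Bool) (i : Fin d) (b : Bool) (y : Fin d → Option Bool) :
    Dd (update x i (some b)) y ≤ Dd x y + 1 := by
  refine (card_le_card fun j hj => ?_).trans (card_insert_le i _)
  obtain ⟨c, hxj, hyj⟩ := (mem_filter.mp hj).2
  rcases eq_or_ne j i with rfl | hji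
  · exact mem_insert_self _ _
  · exact mem_insert_of_mem (mem_filter.mpr ⟨mem_univ j, c, by rwa [update_of_ne hji] at hxj, hyj⟩)

lemma Dd_update_eq_zero (hi : x i = none) (b : Bool) : Dd x (update x i (some b)) = 0 := by
  refine card_eq_zero.mpr (filter_eq_empty_iff.mpr fun j _ => ?_)
  rintro ⟨c, hxj, hyj⟩
  rcases eq_or_ne j i with rfl | hji
  · simp [hi] at hxj
  · simp [update_of_ne hji, hxj] at hyj

lemma Dd_update_false_update_true (x : Fin d → Option Bool) (i : Fin d) :
    Dd (update x i (some false)) (update x i (some true)) = 1 := by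
  refine card_eq_one.mpr ⟨i, eq_singleton_iff_unique_mem.mpr ⟨by simp, fun j hj => ?_⟩⟩
  obtain ⟨c, h0, h1⟩ := (mem_filter.mp hj).2
  by_contra hji
  rw [update_of_ne hji] at h0 h1
  simp [h0] at h1

end Distance

section Neighborly

variable {d k : ℕ} {F G : Finset (Fin d → Option Bool)}

lemma Nbly.mono (hF : Nbly k F) (hGF : G ⊆ F) : Nbly k G :=
  fun x hx y hy => hF x (hGF hx) y (hGF hy)

lemma Nbly.insert (hG : Nbly k G) {a : Fin d → Option Bool}
    (ha : ∀ y ∈ G, y ≠ a → 1 ≤ Dd a y ∧ Dd a y ≤ k) : Nbly k (insert a G) := by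
  intro x hx y hy hxy
  rw [mem_insert] at hx hy
  rcases hx with rfl | hx <;> rcases hy with rfl | hy
  · exact absurd rfl hxy
  · exact ha y hy (Ne.symm hxy)
  · rw [Dd_comm]; exact ha x hx hxy
  · exact hG x hx y hy hxy

def splitJoker (F : Finset (Fin d → Option Bool)) (x : Fin d → Option Bool) (i : Fin d) :
    Finset (Fin d → Option Bool) :=
  insert (update x i (some false)) (insert (update x i (some true)) (F.erase x))

variable {x : Fin d → Option Bool} {i : Fin d}

lemma Nbly.update_notMem (hF : Nbly k F) (hx : x ∈ F) (hi : x i = none) (b : Bool) :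
    update x i (some b) ∉ F := by
  intro hb
  have hne : x ≠ update x i (some b) := fun h => by simpa [hi] using congrFun h i
  simpa [Dd_update_eq_zero hi] using (hF x hx _ hb hne).1

lemma Nbly.card_splitJoker (hF : Nbly k F) (hx : x ∈ F) (hi : x i = none) :
    #(splitJoker F x i) = #F + 1 := by
  have hfalse := hF.update_notMem hx hi false
  have htrue := hF.update_notMem hx hi true
  have hne : update x i (some false) ≠ update x i (some true) := fun h => by
    simpa using congrFun h i
  rw [splitJoker, card_insert_of_notMem (by simp [hne, hfalse]),
    card_insert_of_notMem (by simp [htrue]), card_erase_of_mem hx]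
  have := card_pos.mpr ⟨x, hx⟩
  omega

lemma Nbly.splitJoker (hF : Nbly k F) (hx : x ∈ F) (hi : x i = none) (hjok : d - k < jok x) :
    Nbly k (splitJoker F x i) := by
  have hk : 1 ≤ k := by have := jok_le x; omega
  have hnew : ∀ b : Bool, ∀ y ∈ F.erase x,
      1 ≤ Dd (update x i (some b)) y ∧ Dd (update x i (some b)) y ≤ k := by
    intro b y hy
    obtain ⟨hyx, hyF⟩ := mem_erase.mp hy
    have hpos := (hF x hx y hyF (Ne.symm hyx)).1
    have hlower := Dd_le_Dd_update hi b y
    have hupper := Dd_update_le_succ x i b y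
    have hfree := Dd_le_sub_jok x y
    omega
  refine ((hF.mono (erase_subset x F)).insert fun y hy _ => hnew true y hy).insert ?_
  intro y hy _
  rcases mem_insert.mp hy with rfl | hy
  · rw [Dd_update_false_update_true]; exact ⟨le_rfl, hk⟩
  · exact hnew false y hy

end Neighborly

theorem stmt_14_general {k d : ℕ}
    (F : Finset (Fin d → Option Bool)) (hF : Nbly k F)
    (hmax : ∀ G : Finset (Fin d → Option Bool), Nbly k G → G.card ≤ F.card) :
    ∀ x ∈ F, jok x ≤ d - k := by
  intro x hx
  by_contra! hjok
  obtain ⟨i, hi⟩ := card_pos.mp (Nat.zero_lt_of_lt hjok)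
  have hnone : x i = none := (mem_filter.mp hi).2
  have hle := hmax _ (hF.splitJoker hx hnone hjok)
  rw [hF.card_splitJoker hx hnone] at hle
  omega

theorem stmt_14 {k d : ℕ} (hk : 1 ≤ k) (hkd : k ≤ d)
    (F : Finset (Fin d → Option Bool)) (hF : Nbly k F)
    (hmax : ∀ G : Finset (Fin d → Option Bool), Nbly k G → G.card ≤ F.card) :
    ∀ x ∈ F, jok x ≤ d - k :=
  stmt_14_general F hF hmax
end
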